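/- arXiv:2010.05492 — 4 statements merged into one kernel-verified Lean document; each statement's English description precedes it below -/
import Mathlib

section
/- For every natural number n ≥ 1 and every real number c with 0 < c < 1, Γ(n)/Γ(c + n) ≤ n^{−c}·((n + c)/n)^{1−c}, where Γ is the real Gamma function. -/
/-!
Log-convexity of `Γ` on `(0, ∞)` applied to the convex combination
`x + 1 = c • (x + c) + (1 - c) • (x + c + 1)` gives
`Γ(x + 1) ≤ Γ(x + c) ^ c * Γ(x + c + 1) ^ (1 - c) = (x + c) ^ (1 - c) * Γ(x + c)`,
and `Γ(x + 1) = x * Γ(x)` turns this into Wendel's bound.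
-/

namespace Real

theorem mul_Gamma_le_rpow_mul_Gamma_add {x c : ℝ} (hx : 0 < x) (hc0 : 0 < c) (hc1 : c < 1) :
    x * Gamma x ≤ (x + c) ^ (1 - c) * Gamma (x + c) := by
  have hxc : 0 < x + c := by linarith
  have hG : 0 < Gamma (x + c) := Gamma_pos_of_pos hxc
  have hlogconv := Gamma_mul_add_mul_le_rpow_Gamma_mul_rpow_Gamma hxc (by linarith : 0 < x + c + 1)
    hc0 (sub_pos.2 hc1) (add_sub_cancel c 1)
  rw [show c * (x + c) + (1 - c) * (x + c + 1) = x + 1 by ring, Gamma_add_one hx.ne',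
    Gamma_add_one hxc.ne', mul_rpow hxc.le hG.le] at hlogconv
  calc x * Gamma x ≤ Gamma (x + c) ^ c * ((x + c) ^ (1 - c) * Gamma (x + c) ^ (1 - c)) :=
        hlogconv
    _ = (x + c) ^ (1 - c) * Gamma (x + c) ^ (c + (1 - c)) := by rw [rpow_add hG]; ring
    _ = (x + c) ^ (1 - c) * Gamma (x + c) := by rw [add_sub_cancel, rpow_one]

theorem Gamma_div_Gamma_add_le {x c : ℝ} (hx : 0 < x) (hc0 : 0 < c) (hc1 : c < 1) :
    Gamma x / Gamma (x + c) ≤ x ^ (-c) * ((x + c) / x) ^ (1 - c) := by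
  have hxc : 0 < x + c := by linarith
  have hrhs : x ^ (-c) * ((x + c) / x) ^ (1 - c) = (x + c) ^ (1 - c) / x := by
    rw [div_rpow hxc.le hx.le, rpow_sub hx, rpow_one, rpow_neg hx.le]
    field_simp
  rw [hrhs, div_le_div_iff₀ (Gamma_pos_of_pos hxc) hx, mul_comm (Gamma x)]
  exact mul_Gamma_le_rpow_mul_Gamma_add hx hc0 hc1

end Real

/-- Wendel's inequality: for every natural `n ≥ 1` and real `0 < c < 1`,
`Γ(n)/Γ(c + n) ≤ n^{−c}·((n + c)/n)^{1−c}`. -/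
theorem gamma_ratio_le (n : ℕ) (hn : 1 ≤ n) (c : ℝ) (hc0 : 0 < c) (hc1 : c < 1) :
    Real.Gamma n / Real.Gamma (c + n)
      ≤ (n : ℝ) ^ (-c) * (((n : ℝ) + c) / (n : ℝ)) ^ (1 - c) := by
  rw [add_comm c]
  exact Real.Gamma_div_Gamma_add_le (by exact_mod_cast hn) hc0 hc1
end

section
/- The function f : ℚ_p → ℝ defined by f(x) = (p^b − 1)·(p/(p−1))·|x|_p^{−(b+1)} if |x|_p > 1 and f(x) = 0 if |x|_p ≤ 1 is nonnegative, measurable, and satisfies ∫_{ℚ_p} f dμ = 1; that is, f is a probability density with respect to μ. -/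
open MeasureTheory

noncomputable instance (p : ℕ) [Fact p.Prime] : MeasurableSpace ℚ_[p] := borel _
instance (p : ℕ) [Fact p.Prime] : BorelSpace ℚ_[p] := ⟨rfl⟩

/-- The density `f(x) = (p^b − 1)·(p/(p−1))·|x|_p^{−(b+1)}` for `|x|_p > 1`, `f(x) = 0`
for `|x|_p ≤ 1`. -/
noncomputable def padicStepDensity (p : ℕ) [Fact p.Prime] (b : ℝ) (x : ℚ_[p]) : ℝ :=
  if 1 < ‖x‖ then ((p : ℝ) ^ b - 1) * ((p : ℝ) / ((p : ℝ) - 1)) * ‖x‖ ^ (-(b + 1)) else 0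

/-!
Since the maximal ideal `pℤ_p` has index `p` in `ℤ_p`, multiplication by `p` scales every Haar
measure on `ℚ_p` by `p⁻¹`, so the ball `‖x‖ ≤ p^n` has measure `p^n` and the sphere
`‖x‖ = p^(n+1)` has measure `p^(n+1) - p^n`. The density is constant on each such sphere, and
summing over the spheres gives the geometric series `∑ₙ (p^b - 1) p^(-b(n+1)) = 1`.
-/

open IsLocalRing Pointwise Function

lemma hasSum_sub_one_mul_inv_pow_succ {a : ℝ} (ha : 1 < a) :
    HasSum (fun n : ℕ ↦ (a - 1) * a⁻¹ ^ (n + 1)) 1 := by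
  have h := (hasSum_geometric_of_lt_one (inv_nonneg.mpr (zero_le_one.trans ha.le))
    (inv_lt_one_of_one_lt₀ ha)).mul_left ((a - 1) * a⁻¹)
  have hsum : (a - 1) * a⁻¹ * (1 - a⁻¹)⁻¹ = 1 := by
    have : a - 1 ≠ 0 := by linarith
    field_simp
  rw [hsum] at h
  simpa only [pow_succ', mul_assoc] using h

lemma div_sub_one_mul_rpow_mul_sub_pow {q : ℝ} (hq : 1 < q) (b : ℝ) (n : ℕ) :
    q / (q - 1) * (q ^ (n + 1)) ^ (-(b + 1)) * (q ^ (n + 1) - q ^ n) = (q ^ b)⁻¹ ^ (n + 1) := by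
  have hq0 : 0 < q := zero_lt_one.trans hq
  have hrpow : (q ^ (n + 1)) ^ (-(b + 1)) = ((q ^ b) ^ (n + 1))⁻¹ * (q ^ (n + 1))⁻¹ := by
    rw [neg_add, Real.rpow_add (by positivity), Real.rpow_neg_one, Real.rpow_neg (by positivity),
      Real.rpow_pow_comm hq0.le]
  have : q - 1 ≠ 0 := by linarith
  rw [hrpow, inv_pow]
  field_simp
  ring

namespace PadicInt

variable {p : ℕ} [Fact p.Prime]

lemma index_maximalIdeal : (maximalIdeal ℤ_[p]).toAddSubgroup.index = p := by
  have h := AddSubgroup.index_ker (toZMod : ℤ_[p] →+* ZMod p).toAddMonoidHom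
  rw [AddMonoidHom.range_eq_top.mpr (ZMod.ringHom_surjective _), AddSubgroup.card_top,
    Nat.card_zmod] at h
  rw [← ker_toZMod]
  exact h

lemma coe_image_maximalIdeal :
    ((↑) : ℤ_[p] → ℚ_[p]) '' (maximalIdeal ℤ_[p] : Set ℤ_[p]) =
      (p : ℚ_[p]) • {x : ℚ_[p] | ‖x‖ ≤ 1} := by
  ext x
  constructor
  · rintro ⟨z, hz, rfl⟩
    obtain ⟨y, rfl⟩ := (norm_lt_one_iff_dvd z).mp (mem_nonunits.mp hz)
    exact ⟨y, y.2, by simp⟩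
  · rintro ⟨y, hy, rfl⟩
    exact ⟨(p : ℤ_[p]) * ⟨y, hy⟩,
      mem_nonunits.mpr ((norm_lt_one_iff_dvd _).mpr (dvd_mul_right _ _)), by push_cast; rfl⟩

end PadicInt

namespace Padic

variable {p : ℕ} [Fact p.Prime]

lemma one_lt_natCast_p : (1 : ℝ) < p := Nat.one_lt_cast.mpr (Fact.out : p.Prime).one_lt

lemma isCompact_setOf_norm_le_one : IsCompact {x : ℚ_[p] | ‖x‖ ≤ 1} := by
  simpa [Metric.closedBall, dist_eq_norm] using isCompact_closedBall (0 : ℚ_[p]) 1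

lemma isOpen_setOf_norm_le_one : IsOpen {x : ℚ_[p] | ‖x‖ ≤ 1} := by
  simpa using (PadicInt.isOpenEmbedding_coe (p := p)).isOpen_range

/-- `ℤ_p` is the union of the `p` cosets of `pℤ_p`, and the restriction of `μ` to `ℤ_p` is
translation invariant. -/
theorem natCast_mul_measure_smul_setOf_norm_le_one (μ : Measure ℚ_[p]) [μ.IsAddHaarMeasure] :
    p * μ ((p : ℚ_[p]) • {x | ‖x‖ ≤ 1}) = μ {x | ‖x‖ ≤ 1} := by
  let _ : MeasurableSpace ℤ_[p] := Subtype.instMeasurableSpace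
  have : BorelSpace ℤ_[p] := Subtype.borelSpace _
  let ι : ℤ_[p] →+ ℚ_[p] := (PadicInt.Coe.ringHom (p := p)).toAddMonoidHom
  have hι : MeasurableEmbedding ι := PadicInt.isOpenEmbedding_coe.measurableEmbedding
  have := Measure.IsAddLeftInvariant.comap μ hι
  have : (maximalIdeal ℤ_[p]).toAddSubgroup.FiniteIndex :=
    ⟨by rw [PadicInt.index_maximalIdeal]; exact (Fact.out : p.Prime).ne_zero⟩
  have hmeas : MeasurableSet ((maximalIdeal ℤ_[p]).toAddSubgroup : Set ℤ_[p]) :=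
    (isOpen_lt continuous_norm (continuous_const (y := (1 : ℝ)))).measurableSet.congr
      (Set.ext fun _ ↦ PadicInt.mem_nonunits.symm)
  have h := AddSubgroup.index_mul_measure _ hmeas (μ.comap ι)
  rw [PadicInt.index_maximalIdeal, hι.comap_apply, hι.comap_apply, Set.image_univ,
    show Set.range ι = {x : ℚ_[p] | ‖x‖ ≤ 1} from Subtype.range_coe] at h
  rwa [← PadicInt.coe_image_maximalIdeal]

noncomputable def pUnit (p : ℕ) [Fact p.Prime] : ℚ_[p]ˣ :=
  Units.mk0 p (Nat.cast_ne_zero.mpr (Fact.out : p.Prime).ne_zero)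

theorem distribHaarChar_pUnit : distribHaarChar ℚ_[p] (pUnit p) = (p : NNReal)⁻¹ := by
  let μ : Measure ℚ_[p] := Measure.addHaar
  refine distribHaarChar_eq_of_measure_smul_eq_mul (μ := μ)
    (isOpen_setOf_norm_le_one.measure_ne_zero μ ⟨0, by simp⟩)
    isCompact_setOf_norm_le_one.measure_ne_top ?_
  have hp : (p : ENNReal) ≠ 0 := by exact_mod_cast (Fact.out : p.Prime).ne_zero
  rw [ENNReal.coe_inv (by exact_mod_cast (Fact.out : p.Prime).ne_zero), ENNReal.coe_natCast,
    ← natCast_mul_measure_smul_setOf_norm_le_one μ, ← mul_assoc,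
    ENNReal.inv_mul_cancel hp (ENNReal.natCast_ne_top p), one_mul]
  rfl

lemma setOf_norm_le_pow_eq_smul (n : ℕ) :
    {x : ℚ_[p] | ‖x‖ ≤ (p : ℝ) ^ n} = (pUnit p ^ n)⁻¹ • {x | ‖x‖ ≤ 1} := by
  ext x
  rw [Set.mem_inv_smul_set_iff]
  simp only [Set.mem_ofPred_eq, Units.smul_def, pUnit, Units.val_pow_eq_pow_val, Units.val_mk0,
    smul_eq_mul, norm_mul, norm_pow, Padic.norm_p]
  rw [inv_pow, inv_mul_le_iff₀ (pow_pos (zero_lt_one.trans one_lt_natCast_p) n), mul_one]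

theorem measure_setOf_norm_le_pow (μ : Measure ℚ_[p]) [μ.IsAddHaarMeasure] (n : ℕ) :
    μ {x : ℚ_[p] | ‖x‖ ≤ (p : ℝ) ^ n} = p ^ n * μ {x | ‖x‖ ≤ 1} := by
  rw [setOf_norm_le_pow_eq_smul, ← distribHaarChar_mul, map_inv, map_pow, distribHaarChar_pUnit]
  simp

lemma setOf_norm_eq_pow_succ (n : ℕ) :
    {x : ℚ_[p] | ‖x‖ = (p : ℝ) ^ (n + 1)} =
      {x | ‖x‖ ≤ (p : ℝ) ^ (n + 1)} \ {x | ‖x‖ ≤ (p : ℝ) ^ n} := by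
  ext x
  have hdiscrete := Padic.norm_le_pow_iff_norm_lt_pow_add_one x n
  rw [zpow_natCast, ← Nat.cast_succ, zpow_natCast] at hdiscrete
  simp only [Set.mem_ofPred_eq, Set.mem_sdiff, hdiscrete, not_lt]
  exact ⟨fun h ↦ ⟨h.le, h.ge⟩, fun h ↦ le_antisymm h.1 h.2⟩

theorem measure_setOf_norm_eq_pow_succ (μ : Measure ℚ_[p]) [μ.IsAddHaarMeasure] (n : ℕ) :
    μ {x : ℚ_[p] | ‖x‖ = (p : ℝ) ^ (n + 1)} = (p ^ (n + 1) - p ^ n) * μ {x | ‖x‖ ≤ 1} := by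
  have hsub : {x : ℚ_[p] | ‖x‖ ≤ (p : ℝ) ^ n} ⊆ {x | ‖x‖ ≤ (p : ℝ) ^ (n + 1)} := fun x hx ↦
    hx.trans (pow_le_pow_right₀ one_lt_natCast_p.le n.le_succ)
  have hfin := isCompact_setOf_norm_le_one.measure_ne_top (μ := μ)
  have hball_fin : μ {x : ℚ_[p] | ‖x‖ ≤ (p : ℝ) ^ n} ≠ ⊤ := by
    rw [measure_setOf_norm_le_pow]
    exact ENNReal.mul_ne_top (by simp) hfin
  rw [setOf_norm_eq_pow_succ,
    measure_sdiff hsub (measurableSet_le measurable_norm measurable_const).nullMeasurableSet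
      hball_fin,
    measure_setOf_norm_le_pow, measure_setOf_norm_le_pow, ENNReal.sub_mul fun _ _ ↦ hfin]

lemma exists_norm_eq_pow_succ {x : ℚ_[p]} (hx : 1 < ‖x‖) :
    ∃ n : ℕ, ‖x‖ = (p : ℝ) ^ (n + 1) := by
  have hx0 : x ≠ 0 := by rintro rfl; norm_num at hx
  rw [Padic.norm_eq_zpow_neg_valuation hx0] at hx ⊢
  have hv : 0 < -x.valuation := (one_lt_zpow_iff_right₀ one_lt_natCast_p).mp hx
  refine ⟨(-x.valuation - 1).toNat, ?_⟩
  rw [← zpow_natCast]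
  congr 1
  omega

lemma setOf_one_lt_norm_eq_iUnion :
    {x : ℚ_[p] | 1 < ‖x‖} = ⋃ n : ℕ, {x | ‖x‖ = (p : ℝ) ^ (n + 1)} := by
  ext x
  simp only [Set.mem_ofPred_eq, Set.mem_iUnion]
  refine ⟨exists_norm_eq_pow_succ, ?_⟩
  rintro ⟨n, hn⟩
  exact hn ▸ one_lt_pow₀ one_lt_natCast_p n.succ_ne_zero

lemma pairwise_disjoint_setOf_norm_eq_pow_succ :
    Pairwise (Disjoint on fun n : ℕ ↦ {x : ℚ_[p] | ‖x‖ = (p : ℝ) ^ (n + 1)}) := by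
  intro m n hmn
  refine Set.disjoint_left.mpr fun x hm hn ↦ hmn ?_
  have := pow_right_injective₀ (zero_lt_one.trans one_lt_natCast_p) one_lt_natCast_p.ne'
    ((hm : ‖x‖ = _).symm.trans hn)
  simpa using this

end Padic

open Padic

section Density

variable {p : ℕ} [Fact p.Prime] {b : ℝ}

lemma padicStepDensity_nonneg (hb : 0 ≤ b) (x : ℚ_[p]) : 0 ≤ padicStepDensity p b x := by
  unfold padicStepDensity
  split_ifs
  · have hpb : 1 ≤ (p : ℝ) ^ b := Real.one_le_rpow one_lt_natCast_p.le hb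
    have hp : 0 ≤ (p : ℝ) / (p - 1) :=
      div_nonneg (by positivity) (by linarith [one_lt_natCast_p (p := p)])
    exact mul_nonneg (mul_nonneg (by linarith) hp) (by positivity)
  · exact le_rfl

lemma measurable_padicStepDensity : Measurable (padicStepDensity p b) :=
  Measurable.ite (measurableSet_lt measurable_const measurable_norm) (by fun_prop) measurable_const

lemma padicStepDensity_of_norm_eq_pow_succ {x : ℚ_[p]} {n : ℕ}
    (hx : ‖x‖ = (p : ℝ) ^ (n + 1)) :
    padicStepDensity p b x =
      ((p : ℝ) ^ b - 1) * (p / (p - 1)) * ((p : ℝ) ^ (n + 1)) ^ (-(b + 1)) := by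
  rw [padicStepDensity, if_pos (hx ▸ one_lt_pow₀ one_lt_natCast_p n.succ_ne_zero), hx]

theorem setLIntegral_padicStepDensity_setOf_norm_eq_pow_succ (μ : Measure ℚ_[p])
    [μ.IsAddHaarMeasure] (n : ℕ) :
    ∫⁻ x in {x : ℚ_[p] | ‖x‖ = (p : ℝ) ^ (n + 1)}, ENNReal.ofReal (padicStepDensity p b x) ∂μ =
      ENNReal.ofReal (((p : ℝ) ^ b - 1) * ((p : ℝ) ^ b)⁻¹ ^ (n + 1)) * μ {x | ‖x‖ ≤ 1} := by
  have hmono : (p : ℝ) ^ n ≤ (p : ℝ) ^ (n + 1) :=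
    pow_le_pow_right₀ one_lt_natCast_p.le (n.le_add_right 1)
  have hsphere : ((p : ENNReal) ^ (n + 1) - p ^ n) =
      ENNReal.ofReal ((p : ℝ) ^ (n + 1) - p ^ n) := by
    rw [ENNReal.ofReal_sub _ (by positivity), ENNReal.ofReal_pow (by positivity),
      ENNReal.ofReal_pow (by positivity), ENNReal.ofReal_natCast]
  rw [setLIntegral_congr_fun (measurableSet_eq_fun measurable_norm measurable_const)
      fun x hx ↦ congrArg ENNReal.ofReal (padicStepDensity_of_norm_eq_pow_succ hx),
    setLIntegral_const, measure_setOf_norm_eq_pow_succ, hsphere, ← mul_assoc,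
    ← ENNReal.ofReal_mul' (sub_nonneg.mpr hmono),
    ← div_sub_one_mul_rpow_mul_sub_pow one_lt_natCast_p b n]
  congr 2
  ring

theorem lintegral_padicStepDensity (hb : 0 < b) (μ : Measure ℚ_[p]) [μ.IsAddHaarMeasure] :
    ∫⁻ x, ENNReal.ofReal (padicStepDensity p b x) ∂μ = μ {x | ‖x‖ ≤ 1} := by
  have hpb : 1 < (p : ℝ) ^ b := Real.one_lt_rpow one_lt_natCast_p hb
  have hsupp :
      support (fun x ↦ ENNReal.ofReal (padicStepDensity p b x)) ⊆ {x : ℚ_[p] | 1 < ‖x‖} :=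
    support_subset_iff'.mpr fun x (h : ¬1 < ‖x‖) ↦ by simp [padicStepDensity, h]
  rw [← setLIntegral_eq_of_support_subset hsupp, setOf_one_lt_norm_eq_iUnion,
    lintegral_iUnion (fun _ ↦ measurableSet_eq_fun measurable_norm measurable_const)
      pairwise_disjoint_setOf_norm_eq_pow_succ]
  simp only [setLIntegral_padicStepDensity_setOf_norm_eq_pow_succ, ENNReal.tsum_mul_right]
  have hsum := hasSum_sub_one_mul_inv_pow_succ hpb
  rw [← ENNReal.ofReal_tsum_of_nonneg (fun n ↦ by have := hpb; positivity) hsum.summable,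
    hsum.tsum_eq, ENNReal.ofReal_one, one_mul]

end Density

/-- The function `f` above is nonnegative, measurable, and integrates to `1` against the Haar
measure `μ` on `ℚ_p` normalized so that `μ(ℤ_p) = 1`; i.e., `f` is a probability density. -/
theorem padicStepDensity_is_probability_density (p : ℕ) [Fact p.Prime] (b : ℝ) (hb : 0 < b)
    (μ : Measure ℚ_[p]) [μ.IsAddHaarMeasure] (hμ : μ {x : ℚ_[p] | ‖x‖ ≤ 1} = 1) :
    (∀ x : ℚ_[p], 0 ≤ padicStepDensity p b x) ∧
      Measurable (padicStepDensity p b) ∧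
      ∫ x, padicStepDensity p b x ∂μ = 1 := by
  have hnonneg := padicStepDensity_nonneg (p := p) hb.le
  refine ⟨hnonneg, measurable_padicStepDensity, ?_⟩
  rw [integral_eq_lintegral_of_nonneg_ae (.of_forall hnonneg)
      measurable_padicStepDensity.aestronglyMeasurable, lintegral_padicStepDensity hb, hμ,
    ENNReal.toReal_one]
end

section
/- For every t > 0, the function ρ_t : ℚ_p → ℝ defined by ρ_t(x) = Σ_{k∈ℤ} p^k·(e^{−σ t p^{kb}} − e^{−σ t p^{(k+1)b}})·𝟙[|x|_p ≤ p^{−k}] is well defined (the series converges for every x ≠ 0), nonnegative, and satisfies ∫_{ℚ_p} ρ_t dμ = 1; that is, ρ_t is a probability density with respect to μ. -/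
/-!
Each summand `p^k 𝟙[|x|_p ≤ p^{-k}]` is the uniform probability density on the ball `p^k ℤ_p`,
since multiplication by `p` scales the Haar measure by `p⁻¹` (`ℤ_p` is the disjoint union of
the `p` translates `j + pℤ_p`, `0 ≤ j < p`). So `ρ_t` is a mixture of these densities with the
weights `e(k) - e(k+1)`, where `e(k) = exp(-σ t p^{kb})` decreases from `1` at `k = -∞` to `0`
at `k = +∞`: the weights are nonnegative and telescope to `1`. For `x ≠ 0` the `k`-th term
vanishes unless `p^k ≤ |x|_p⁻¹`, so the series is dominated by `|x|_p⁻¹ (e(k) - e(k+1))`.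
-/

open MeasureTheory

open scoped Classical

open Metric Filter Topology Real
open scoped NNReal ENNReal Pointwise

theorem Nat.hasSum_sub_succ_of_antitone {f : ℕ → ℝ} (hf : Antitone f) {b : ℝ}
    (hb : Tendsto f atTop (𝓝 b)) : HasSum (fun n ↦ f n - f (n + 1)) (f 0 - b) := by
  refine (hasSum_iff_tendsto_nat_of_nonneg (fun n ↦ sub_nonneg.2 (hf n.le_succ)) _).2 ?_
  simp_rw [Finset.sum_range_sub']
  exact tendsto_const_nhds.sub hb

theorem Int.hasSum_sub_succ_of_antitone {f : ℤ → ℝ} (hf : Antitone f) {a b : ℝ}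
    (ha : Tendsto f atBot (𝓝 a)) (hb : Tendsto f atTop (𝓝 b)) :
    HasSum (fun k ↦ f k - f (k + 1)) (a - b) := by
  have hpos := Nat.hasSum_sub_succ_of_antitone (f := fun n : ℕ ↦ f n)
    (fun m n hmn ↦ hf (Nat.cast_le.2 hmn)) (hb.comp tendsto_natCast_atTop_atTop)
  have hneg := Nat.hasSum_sub_succ_of_antitone (f := fun n : ℕ ↦ -f (-n))
    (fun m n hmn ↦ neg_le_neg (hf (neg_le_neg (Nat.cast_le.2 hmn))))
    ((ha.comp (tendsto_neg_atTop_atBot.comp tendsto_natCast_atTop_atTop)).neg)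
  have h := HasSum.of_nat_of_neg_add_one (f := fun k : ℤ ↦ f k - f (k + 1))
    (by simpa using hpos) (by simpa [sub_eq_neg_add, add_comm] using hneg)
  rwa [show f 0 - b + (a + -f 0) = a - b by ring] at h

section ExpRpow

variable {a b c : ℝ}

lemma antitone_exp_mul_rpow_intCast (ha : a ≤ 0) (hb : 0 ≤ b) (hc : 1 ≤ c) :
    Antitone fun k : ℤ ↦ exp (a * c ^ ((k : ℝ) * b)) := fun _ _ hkl ↦
  exp_le_exp.2 <| mul_le_mul_of_nonpos_left (rpow_le_rpow_of_exponent_le hc (by gcongr)) ha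

lemma tendsto_exp_mul_rpow_intCast_atTop (ha : a < 0) (hb : 0 < b) (hc : 1 < c) :
    Tendsto (fun k : ℤ ↦ exp (a * c ^ ((k : ℝ) * b))) atTop (𝓝 0) :=
  tendsto_exp_atBot.comp <| Tendsto.const_mul_atTop_of_neg ha <|
    (tendsto_rpow_atTop_of_base_gt_one c hc).comp (tendsto_intCast_atTop_atTop.atTop_mul_const hb)

lemma tendsto_exp_mul_rpow_intCast_atBot (hb : 0 < b) (hc : 1 < c) :
    Tendsto (fun k : ℤ ↦ exp (a * c ^ ((k : ℝ) * b))) atBot (𝓝 1) := by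
  have h := ((tendsto_rpow_atBot_of_base_gt_one c hc).comp
    ((tendsto_intCast_atBot_iff.2 tendsto_id).atBot_mul_const hb)).const_mul a
  simpa [Function.comp_def] using (continuous_exp.tendsto _).comp h

theorem hasSum_exp_mul_rpow_intCast_sub (ha : a < 0) (hb : 0 < b) (hc : 1 < c) :
    HasSum (fun k : ℤ ↦ exp (a * c ^ ((k : ℝ) * b)) - exp (a * c ^ (((k : ℝ) + 1) * b)))
      1 := by
  simpa using Int.hasSum_sub_succ_of_antitone (antitone_exp_mul_rpow_intCast ha.le hb.le hc.le)
    (tendsto_exp_mul_rpow_intCast_atBot hb hc) (tendsto_exp_mul_rpow_intCast_atTop ha hb hc)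

end ExpRpow

lemma ite_norm_le_eq_indicator {E : Type*} [SeminormedAddGroup E] (r : ℝ) :
    (fun x : E ↦ if ‖x‖ ≤ r then (1 : ℝ) else 0) = (closedBall 0 r).indicator 1 := by
  ext x
  simp [Set.indicator_apply]

section IndicatorClosedBall

variable {E : Type*} [NormedAddCommGroup E] [MeasurableSpace E] [BorelSpace E] (μ : Measure E)

lemma integrable_const_mul_ite_norm_le [ProperSpace E] [IsFiniteMeasureOnCompacts μ]
    (c r : ℝ) :
    Integrable (fun x : E ↦ c * if ‖x‖ ≤ r then 1 else 0) μ := by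
  refine Integrable.const_mul ?_ c
  rw [ite_norm_le_eq_indicator, integrable_indicator_iff measurableSet_closedBall]
  exact integrableOn_const (isCompact_closedBall 0 r).measure_ne_top

lemma integral_const_mul_ite_norm_le (c r : ℝ) :
    ∫ x, c * (if ‖x‖ ≤ r then 1 else 0) ∂μ = c * μ.real (closedBall 0 r) := by
  rw [integral_const_mul, ite_norm_le_eq_indicator,
    integral_indicator_one measurableSet_closedBall]

end IndicatorClosedBall

section ZpowMulIte

variable {E : Type*} [SeminormedAddGroup E] {q : ℝ}

lemma zpow_mul_mul_ite_nonneg (hq : 0 ≤ q) {c : ℝ} (hc : 0 ≤ c) (k : ℤ) (x : E) :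
    0 ≤ q ^ k * c * (if ‖x‖ ≤ q ^ (-k) then 1 else 0) :=
  mul_nonneg (mul_nonneg (zpow_nonneg hq k) hc) (by split_ifs <;> norm_num)

theorem summable_zpow_mul_mul_ite_norm_le (hq : 0 < q) {w : ℤ → ℝ} (hw₀ : ∀ k, 0 ≤ w k)
    (hw : Summable w) {x : E} (hx : ‖x‖ ≠ 0) :
    Summable fun k : ℤ ↦ q ^ k * w k * (if ‖x‖ ≤ q ^ (-k) then 1 else 0) := by
  refine .of_nonneg_of_le (zpow_mul_mul_ite_nonneg hq.le (hw₀ _) · x) (fun k ↦ ?_)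
    (hw.mul_left ‖x‖⁻¹)
  split_ifs with h
  · rw [mul_one]
    refine mul_le_mul_of_nonneg_right ?_ (hw₀ k)
    rw [le_inv_comm₀ (zpow_pos hq k) ((norm_nonneg x).lt_of_ne' hx), ← zpow_neg]
    exact h
  · simpa using mul_nonneg (inv_nonneg.2 (norm_nonneg x)) (hw₀ k)

end ZpowMulIte

namespace Padic

variable {p : ℕ} [Fact p.Prime]

lemma norm_le_inv_of_norm_lt_one {x : ℚ_[p]} (hx : ‖x‖ < 1) : ‖x‖ ≤ (p : ℝ)⁻¹ := by
  simpa using (norm_lt_pow_iff_norm_le_pow_sub_one x 0).1 (by simpa using hx)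

lemma closedBall_zero_one_eq_biUnion :
    closedBall (0 : ℚ_[p]) 1 = ⋃ j ∈ Finset.range p, closedBall (j : ℚ_[p]) (p : ℝ)⁻¹ := by
  ext x
  simp only [Set.mem_iUnion, sub_zero, mem_closedBall, Finset.mem_range, exists_prop,
    dist_eq_norm]
  constructor
  · intro hx
    obtain ⟨j, hj, hmem⟩ := PadicInt.exists_mem_range (⟨x, hx⟩ : ℤ_[p])
    exact ⟨j, hj, norm_le_inv_of_norm_lt_one (PadicInt.mem_nonunits.1 hmem)⟩
  · rintro ⟨j, -, hx⟩
    calc ‖x‖ = ‖(x - j) + j‖ := by rw [sub_add_cancel]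
      _ ≤ max ‖x - j‖ ‖(j : ℚ_[p])‖ := nonarchimedean _ _
      _ ≤ 1 := max_le
          (hx.trans (inv_le_one_of_one_le₀ (by exact_mod_cast (Fact.out : p.Prime).one_le)))
          (by simpa using norm_int_le_one (p := p) j)

lemma pairwiseDisjoint_closedBall_natCast :
    (Finset.range p : Set ℕ).PairwiseDisjoint fun j ↦ closedBall (j : ℚ_[p]) (p : ℝ)⁻¹ := by
  intro i hi j hj hij
  refine Set.disjoint_left.2 fun x hxi hxj ↦ hij ?_
  have hdist : ‖((i - j : ℤ) : ℚ_[p])‖ < 1 := by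
    calc ‖((i - j : ℤ) : ℚ_[p])‖ = dist (i : ℚ_[p]) j := by push_cast; rw [dist_eq_norm]
      _ ≤ max (dist (i : ℚ_[p]) x) (dist x j) := IsUltrametricDist.dist_triangle_max _ _ _
      _ ≤ (p : ℝ)⁻¹ := max_le (by rwa [dist_comm]) hxj
      _ < 1 := inv_lt_one_of_one_lt₀ (by exact_mod_cast (Fact.out : p.Prime).one_lt)
  simp only [Finset.coe_range, Set.mem_Iio] at hi hj
  have := Int.eq_zero_of_abs_lt_dvd (norm_intCast_lt_one_iff.1 hdist)
    (abs_sub_lt_iff.2 ⟨by omega, by omega⟩)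
  omega

lemma addHaar_closedBall_one_eq_mul (μ : Measure ℚ_[p]) [μ.IsAddHaarMeasure] :
    μ (closedBall 0 1) = p * μ (closedBall 0 (p : ℝ)⁻¹) := by
  rw [closedBall_zero_one_eq_biUnion,
    measure_biUnion_finset pairwiseDisjoint_closedBall_natCast fun _ _ ↦ measurableSet_closedBall]
  simp_rw [Measure.addHaar_closedBall_center]
  rw [Finset.sum_const, Finset.card_range, nsmul_eq_mul]

noncomputable def primeUnit (p : ℕ) [Fact p.Prime] : ℚ_[p]ˣ :=
  Units.mk0 p (by exact_mod_cast (Fact.out : p.Prime).ne_zero)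

lemma primeUnit_zpow_smul_closedBall (n : ℤ) :
    primeUnit p ^ n • closedBall (0 : ℚ_[p]) 1 = closedBall 0 ((p : ℝ) ^ (-n)) := by
  rw [Units.smul_def, Units.val_zpow_eq_zpow_val,
    smul_closedBall' (zpow_ne_zero _ (Units.ne_zero _)), smul_zero, mul_one, norm_zpow]
  simp [primeUnit, zpow_neg]

lemma distribHaarChar_primeUnit : distribHaarChar ℚ_[p] (primeUnit p) = (p : ℝ≥0)⁻¹ := by
  let μ : Measure ℚ_[p] := .addHaar
  have hp : (p : ℝ≥0∞) ≠ 0 := by exact_mod_cast (Fact.out : p.Prime).ne_zero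
  refine distribHaarChar_eq_of_measure_smul_eq_mul (μ := μ)
    (measure_closedBall_pos μ 0 one_pos).ne' (isCompact_closedBall 0 1).measure_ne_top ?_
  rw [← zpow_one (primeUnit p), primeUnit_zpow_smul_closedBall, zpow_neg_one,
    addHaar_closedBall_one_eq_mul μ, ← mul_assoc, ENNReal.coe_inv (by exact_mod_cast hp),
    ENNReal.coe_natCast, ENNReal.inv_mul_cancel hp (ENNReal.natCast_ne_top p), one_mul]

theorem addHaar_closedBall_zpow (μ : Measure ℚ_[p]) [μ.IsAddHaarMeasure] (n : ℤ) :
    μ (closedBall 0 ((p : ℝ) ^ (-n))) = ((p : ℝ≥0) ^ (-n) : ℝ≥0) * μ (closedBall 0 1) := by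
  rw [← primeUnit_zpow_smul_closedBall, ← distribHaarChar_mul, map_zpow,
    distribHaarChar_primeUnit, inv_zpow']

theorem integral_zpow_mul_mul_ite_norm_le (μ : Measure ℚ_[p]) [μ.IsAddHaarMeasure]
    (hμ : μ (closedBall 0 1) = 1) (k : ℤ) (c : ℝ) :
    ∫ x, (p : ℝ) ^ k * c * (if ‖x‖ ≤ (p : ℝ) ^ (-k) then 1 else 0) ∂μ = c := by
  have hp : (p : ℝ) ^ k ≠ 0 := zpow_ne_zero _ (by exact_mod_cast (Fact.out : p.Prime).ne_zero)
  rw [integral_const_mul_ite_norm_le, measureReal_def, addHaar_closedBall_zpow, hμ, mul_one,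
    ENNReal.coe_toReal, NNReal.coe_zpow, NNReal.coe_natCast, zpow_neg, mul_right_comm,
    mul_inv_cancel₀ hp, one_mul]

theorem integral_tsum_zpow_mul_mul_ite_norm_le (μ : Measure ℚ_[p]) [μ.IsAddHaarMeasure]
    (hμ : μ (closedBall 0 1) = 1) {w : ℤ → ℝ} (hw₀ : ∀ k, 0 ≤ w k) (hw : Summable w) :
    ∫ x, ∑' k : ℤ, (p : ℝ) ^ k * w k * (if ‖x‖ ≤ (p : ℝ) ^ (-k) then 1 else 0) ∂μ
      = ∑' k, w k := by
  have hp : (0 : ℝ) ≤ p := Nat.cast_nonneg p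
  rw [← integral_tsum_of_summable_integral_norm
    (fun k ↦ integrable_const_mul_ite_norm_le μ _ _)]
  · simp_rw [integral_zpow_mul_mul_ite_norm_le μ hμ]
  · simpa only [Real.norm_of_nonneg (zpow_mul_mul_ite_nonneg hp (hw₀ _) _ _),
      integral_zpow_mul_mul_ite_norm_le μ hμ] using hw

end Padic

/-- For `t > 0`, the function
`ρ_t(x) = Σ_{k∈ℤ} p^k·(e^{−σtp^{kb}} − e^{−σtp^{(k+1)b}})·𝟙[|x|_p ≤ p^{−k}]`
is well defined (the series converges for every `x ≠ 0`), nonnegative, and integrates to `1`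
against the Haar measure `μ` on `ℚ_p` normalized so that `μ(ℤ_p) = 1`; i.e. `ρ_t` is a
probability density with respect to `μ`. -/
theorem padic_heat_kernel_is_probability_density (p : ℕ) [Fact p.Prime]
    (b σ : ℝ) (hb : 0 < b) (hσ : 0 < σ)
    (μ : Measure ℚ_[p]) [μ.IsAddHaarMeasure] (hμ : μ {x : ℚ_[p] | ‖x‖ ≤ 1} = 1)
    (t : ℝ) (ht : 0 < t) (ρ : ℚ_[p] → ℝ)
    (hρ : ∀ x : ℚ_[p], ρ x = ∑' k : ℤ,
      (p : ℝ) ^ k *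
        (Real.exp (-σ * t * (p : ℝ) ^ ((k : ℝ) * b))
          - Real.exp (-σ * t * (p : ℝ) ^ (((k : ℝ) + 1) * b))) *
        (if ‖x‖ ≤ (p : ℝ) ^ (-k) then 1 else 0)) :
    (∀ x : ℚ_[p], x ≠ 0 → Summable (fun k : ℤ =>
      (p : ℝ) ^ k *
        (Real.exp (-σ * t * (p : ℝ) ^ ((k : ℝ) * b))
          - Real.exp (-σ * t * (p : ℝ) ^ (((k : ℝ) + 1) * b))) *
        (if ‖x‖ ≤ (p : ℝ) ^ (-k) then 1 else 0))) ∧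
      (∀ x : ℚ_[p], 0 ≤ ρ x) ∧
      ∫ x, ρ x ∂μ = 1 := by
  set w : ℤ → ℝ := fun k ↦ Real.exp (-σ * t * (p : ℝ) ^ ((k : ℝ) * b))
    - Real.exp (-σ * t * (p : ℝ) ^ (((k : ℝ) + 1) * b))
  have hp : (1 : ℝ) < p := by exact_mod_cast (Fact.out : p.Prime).one_lt
  have hσt : -σ * t < 0 := by nlinarith
  have hw : HasSum w 1 := hasSum_exp_mul_rpow_intCast_sub hσt hb hp
  have hw₀ (k : ℤ) : 0 ≤ w k := sub_nonneg.2 <| by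
    simpa using antitone_exp_mul_rpow_intCast hσt.le hb.le hp.le (Int.le_add_one le_rfl)
  have hμ' : μ (closedBall 0 1) = 1 := by
    rwa [← show {x : ℚ_[p] | ‖x‖ ≤ 1} = closedBall 0 1 by ext; simp]
  refine ⟨fun x hx ↦ summable_zpow_mul_mul_ite_norm_le (by linarith) hw₀ hw.summable
      (norm_ne_zero_iff.2 hx),
    fun x ↦ (hρ x).symm ▸ tsum_nonneg fun k ↦
      zpow_mul_mul_ite_nonneg (by linarith) (hw₀ k) k x, ?_⟩
  simp_rw [hρ]
  rw [Padic.integral_tsum_zpow_mul_mul_ite_norm_le μ hμ' hw₀ hw.summable, hw.tsum_eq]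
end

section
/- Fix t > 0 and for each natural number m define E_m : ℚ_p → ℝ by E_m(y) = (1 − α·|y|_p^b·p^{−mb})^{⌊t·(σ/α)·p^{mb}⌋} if |y|_p ≤ p^m and E_m(y) = 0 if |y|_p > p^m. Then E_m converges uniformly on ℚ_p, as m → ∞, to the function y ↦ e^{−tσ|y|_p^b}. -/
/-!
Write `x = |y|_p^b`, `P = p^{mb}`, `L = t(σ/α)P` and `N = ⌊L⌋`. For `|y|_p ≤ p^m` the base is
`1 - c` with `c = αx/P ∈ [0, α]` and the limit is `e^{-cL}`. For `c ≤ 1/2` the bounds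
`e^{-(c + 2c²)} ≤ 1 - c ≤ e^{-c}` give `|(1-c)^N - e^{-cN}| ≤ 2(cN)² e^{-cN} / N ≤ 4/N`; for
`c ≥ 1/2` both terms are at most `max(α - 1, e^{-1/2})^N`, which decays because `α < 2`
(this is where `p ≥ 2` enters); passing from `e^{-cN}` to `e^{-cL}` costs at most `1/N`.
Outside the ball `E_m` vanishes and the limit is at most `e^{-tσP}`.
-/

open scoped Classical

noncomputable def alphaConst (p : ℕ) (b : ℝ) : ℝ :=
  ((p : ℝ) / ((p : ℝ) - 1)) * (1 - (p : ℝ) ^ (-(b + 1)))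

open Real Filter Set Topology

namespace Real

theorem sq_mul_exp_neg_le_two {u : ℝ} (hu : 0 ≤ u) : u ^ 2 * exp (-u) ≤ 2 := by
  have := quadratic_le_exp_of_nonneg hu
  rw [exp_neg, ← div_eq_mul_inv, div_le_iff₀ (exp_pos u)]
  nlinarith

theorem exp_neg_sub_two_mul_sq_le_one_sub {c : ℝ} (hc : c ≤ 1 / 2) :
    exp (-(c + 2 * c ^ 2)) ≤ 1 - c := by
  have h1c : 0 < 1 - c := by linarith
  have hlog : -(c + 2 * c ^ 2) ≤ 1 - (1 - c)⁻¹ := by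
    rw [le_sub_iff_add_le, ← le_sub_iff_add_le', inv_le_iff_one_le_mul₀ h1c]
    nlinarith [mul_nonneg (sq_nonneg c) (by linarith : 0 ≤ 1 - 2 * c)]
  calc exp (-(c + 2 * c ^ 2)) ≤ exp (log (1 - c)) :=
        exp_le_exp.2 (hlog.trans (one_sub_inv_le_log_of_pos h1c))
    _ = 1 - c := exp_log h1c

theorem abs_one_sub_pow_sub_exp_le_of_le_half {c : ℝ} (hc0 : 0 ≤ c) (hc : c ≤ 1 / 2) (N : ℕ) :
    |(1 - c) ^ N - exp (-(c * N))| ≤ 4 / N := by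
  rcases N.eq_zero_or_pos with rfl | hN
  · simp
  have hNpos : (0 : ℝ) < N := by exact_mod_cast hN
  have hexp_pow (x : ℝ) : exp x ^ N = exp (x * N) := by rw [← exp_nat_mul, mul_comm]
  have hupper : (1 - c) ^ N ≤ exp (-(c * N)) := by
    rw [neg_mul_eq_neg_mul, ← hexp_pow]
    exact pow_le_pow_left₀ (by linarith) (one_sub_le_exp_neg c) N
  have hlower : exp (-(c * N)) * (1 - 2 * c ^ 2 * N) ≤ (1 - c) ^ N := by
    calc exp (-(c * N)) * (1 - 2 * c ^ 2 * N) ≤ exp (-(c * N)) * exp (-(2 * c ^ 2 * N)) := by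
          gcongr
          linarith [add_one_le_exp (-(2 * c ^ 2 * N))]
      _ = exp (-(c + 2 * c ^ 2)) ^ N := by rw [← exp_add, hexp_pow]; ring_nf
      _ ≤ (1 - c) ^ N := pow_le_pow_left₀ (exp_pos _).le (exp_neg_sub_two_mul_sq_le_one_sub hc) N
  have hgap : exp (-(c * N)) * (2 * c ^ 2 * N) ≤ 4 / N := by
    rw [le_div_iff₀ hNpos]
    nlinarith [sq_mul_exp_neg_le_two (mul_nonneg hc0 hNpos.le)]
  rw [abs_sub_le_iff]
  constructor <;> nlinarith [exp_pos (-(c * N)), div_pos four_pos hNpos]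

theorem abs_one_sub_pow_sub_exp_le_of_half_le {a c : ℝ} (hc : 1 / 2 ≤ c) (hca : c ≤ a) (N : ℕ) :
    |(1 - c) ^ N - exp (-(c * N))| ≤ 2 * max (a - 1) (exp (-(1 / 2))) ^ N := by
  set q := max (a - 1) (exp (-(1 / 2)))
  have hexp : exp (-c) ≤ q := (exp_le_exp.2 (by linarith)).trans (le_max_right _ _)
  have hpow : |1 - c| ^ N ≤ q ^ N := by
    refine pow_le_pow_left₀ (abs_nonneg _) (abs_le.2 ⟨?_, ?_⟩) N
    · linarith [le_max_left (a - 1) (exp (-(1 / 2)))]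
    · linarith [one_sub_le_exp_neg c]
  have hexp_pow : exp (-(c * N)) ≤ q ^ N := by
    rw [neg_mul_eq_neg_mul, mul_comm, exp_nat_mul]
    exact pow_le_pow_left₀ (exp_pos _).le hexp N
  calc |(1 - c) ^ N - exp (-(c * N))| ≤ |(1 - c) ^ N| + |exp (-(c * N))| := abs_sub _ _
    _ ≤ 2 * q ^ N := by rw [abs_pow, abs_of_pos (exp_pos _)]; linarith

theorem abs_exp_neg_mul_sub_exp_neg_mul_le {c N L : ℝ} (hc : 0 ≤ c) (hN : 0 < N) (hNL : N ≤ L)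
    (hLN : L ≤ N + 1) : |exp (-(c * N)) - exp (-(c * L))| ≤ 1 / N := by
  have hanti : exp (-(c * L)) ≤ exp (-(c * N)) := exp_le_exp.2 (by nlinarith)
  have hgap : exp (-(c * N)) - exp (-(c * L)) ≤ exp (-(c * N)) * c := by
    have hsplit : exp (-(c * L)) = exp (-(c * N)) * exp (-(c * (L - N))) := by
      rw [← exp_add]; ring_nf
    have hlin : 1 - c * (L - N) ≤ exp (-(c * (L - N))) := one_sub_le_exp_neg _
    rw [hsplit]
    nlinarith [exp_pos (-(c * N)), mul_nonneg hc (sub_nonneg.2 hLN)]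
  have hdecay : c * N * exp (-(c * N)) ≤ 1 := by
    have := add_one_le_exp (c * N)
    rw [exp_neg, ← div_eq_mul_inv, div_le_one (exp_pos _)]
    linarith
  rw [abs_of_nonneg (sub_nonneg.2 hanti), le_div_iff₀ hN]
  nlinarith

theorem abs_one_sub_pow_sub_exp_le {a c L : ℝ} (hc0 : 0 ≤ c) (hca : c ≤ a) {N : ℕ} (hN : 0 < N)
    (hNL : (N : ℝ) ≤ L) (hLN : L ≤ N + 1) :
    |(1 - c) ^ N - exp (-(c * L))| ≤ 5 / N + 2 * max (a - 1) (exp (-(1 / 2))) ^ N := by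
  have hNpos : (0 : ℝ) < N := Nat.cast_pos.2 hN
  have hL := abs_exp_neg_mul_sub_exp_neg_mul_le hc0 hNpos hNL hLN
  have htri := abs_sub_le ((1 - c) ^ N) (exp (-(c * N))) (exp (-(c * L)))
  rcases le_total c (1 / 2) with hc | hc
  · have hq : 0 ≤ max (a - 1) (exp (-(1 / 2))) ^ N :=
      pow_nonneg ((exp_pos _).le.trans (le_max_right _ _)) N
    have := abs_one_sub_pow_sub_exp_le_of_le_half hc0 hc N
    have : (5 : ℝ) / N = 4 / N + 1 / N := by ring
    linarith
  · have := abs_one_sub_pow_sub_exp_le_of_half_le hc hca N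
    have : 1 / (N : ℝ) ≤ 5 / N := by gcongr; norm_num
    linarith

theorem tendsto_five_div_add_two_mul_max_pow {a : ℝ} (ha : a < 2) :
    Tendsto (fun N : ℕ => 5 / (N : ℝ) + 2 * max (a - 1) (exp (-(1 / 2))) ^ N) atTop (𝓝 0) := by
  have hq0 : 0 ≤ max (a - 1) (exp (-(1 / 2))) := (exp_pos _).le.trans (le_max_right _ _)
  have hq1 : max (a - 1) (exp (-(1 / 2))) < 1 :=
    max_lt (by linarith) (exp_lt_one_iff.2 (by norm_num))
  simpa using (tendsto_const_div_atTop_nhds_zero_nat 5).add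
    ((tendsto_pow_atTop_nhds_zero_of_lt_one hq0 hq1).const_mul 2)

end Real

theorem Metric.tendstoUniformlyOn_of_dist_le {ι α β : Type*} [PseudoMetricSpace β]
    {F : ι → α → β} {f : α → β} {l : Filter ι} {s : Set α} {B : ι → ℝ}
    (hB : Tendsto B l (𝓝 0)) (h : ∀ᶠ i in l, ∀ x ∈ s, dist (f x) (F i x) ≤ B i) :
    TendstoUniformlyOn F f l s :=
  Metric.tendstoUniformlyOn_iff.2 fun _ hε => by
    filter_upwards [h, hB.eventually_lt_const hε] with i hi hBi x hx using (hi x hx).trans_lt hBi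

theorem tendstoUniformlyOn_ite_one_sub_mul_pow_floor {ι : Type*} {l : Filter ι} {P : ι → ℝ}
    (hP : Tendsto P l atTop) {a k : ℝ} (ha : 0 < a) (ha2 : a < 2) (hk : 0 < k) :
    TendstoUniformlyOn
      (fun i x => if x ≤ P i then (1 - a * x * (P i)⁻¹) ^ ⌊k * P i⌋₊ else 0)
      (fun x => exp (-(a * k * x))) l (Ici 0) := by
  set N : ι → ℕ := fun i => ⌊k * P i⌋₊
  set q := max (a - 1) (exp (-(1 / 2)))
  have hN : Tendsto N l atTop := tendsto_nat_floor_atTop.comp (hP.const_mul_atTop hk)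
  have htail : Tendsto (fun i => exp (-(a * k * P i))) l (𝓝 0) :=
    tendsto_exp_atBot.comp (tendsto_neg_atTop_atBot.comp (hP.const_mul_atTop (mul_pos ha hk)))
  refine Metric.tendstoUniformlyOn_of_dist_le
    (B := fun i => 5 / (N i : ℝ) + 2 * q ^ N i + exp (-(a * k * P i)))
    (by simpa only [add_zero, Function.comp_def] using
      ((tendsto_five_div_add_two_mul_max_pow ha2).comp hN).add htail) ?_
  filter_upwards [hP.eventually_gt_atTop 0, hN.eventually_gt_atTop 0] with i hPi hNi x hx
  have hq : 0 ≤ q ^ N i := pow_nonneg ((exp_pos _).le.trans (le_max_right _ _)) _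
  rw [Real.dist_eq]
  split_ifs with hxP
  · have hc0 : 0 ≤ a * x * (P i)⁻¹ := by have : 0 ≤ x := hx; positivity
    have hca : a * x * (P i)⁻¹ ≤ a := by
      rw [mul_assoc, ← div_eq_mul_inv]
      exact mul_le_of_le_one_right ha.le ((div_le_one hPi).2 hxP)
    have hcL : a * k * x = a * x * (P i)⁻¹ * (k * P i) := by field_simp
    have := abs_one_sub_pow_sub_exp_le hc0 hca hNi (Nat.floor_le (by positivity))
      (Nat.lt_floor_add_one (k * P i)).le
    rw [abs_sub_comm, hcL]
    linarith [exp_pos (-(a * k * P i))]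
  · have : exp (-(a * k * x)) ≤ exp (-(a * k * P i)) :=
      exp_le_exp.2 (by nlinarith [mul_pos ha hk])
    rw [sub_zero, abs_of_pos (exp_pos _)]
    have : (0 : ℝ) ≤ 5 / N i := by positivity
    linarith

theorem alphaConst_pos {p : ℕ} (hp : 1 < (p : ℝ)) {b : ℝ} (hb : -1 < b) : 0 < alphaConst p b := by
  have hu : (p : ℝ) ^ (-(b + 1)) < 1 := Real.rpow_lt_one_of_one_lt_of_neg hp (by linarith)
  unfold alphaConst
  have : 0 < (p : ℝ) - 1 := by linarith
  have : 0 < 1 - (p : ℝ) ^ (-(b + 1)) := by linarith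
  positivity

theorem alphaConst_lt_two {p : ℕ} (hp : 2 ≤ (p : ℝ)) (b : ℝ) : alphaConst p b < 2 := by
  have hu : 0 < (p : ℝ) ^ (-(b + 1)) := Real.rpow_pos_of_pos (by linarith) _
  rw [alphaConst, div_mul_eq_mul_div, div_lt_iff₀ (by linarith)]
  nlinarith

/-- Fix `t > 0`, and for each `m : ℕ` let
`E_m(y) = (1 − α·|y|_p^b·p^{−mb})^{⌊t·(σ/α)·p^{mb}⌋}` if `|y|_p ≤ p^m` and `E_m(y) = 0`
otherwise. Then `E_m → (y ↦ e^{−tσ|y|_p^b})` uniformly on `ℚ_p` as `m → ∞`. -/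
theorem Em_tendstoUniformly (p : ℕ) [Fact p.Prime] (b σ : ℝ) (hb : 0 < b) (hσ : 0 < σ)
    (t : ℝ) (ht : 0 < t) :
    TendstoUniformly
      (fun (m : ℕ) (y : ℚ_[p]) =>
        if ‖y‖ ≤ (p : ℝ) ^ (m : ℤ) then
          (1 - alphaConst p b * ‖y‖ ^ b * (p : ℝ) ^ (-((m : ℝ) * b)))
            ^ ⌊t * (σ / alphaConst p b) * (p : ℝ) ^ ((m : ℝ) * b)⌋₊
        else 0)
      (fun y : ℚ_[p] => Real.exp (-(t * σ * ‖y‖ ^ b)))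
      Filter.atTop := by
  have hp2 : (2 : ℝ) ≤ p := by exact_mod_cast (Fact.out : p.Prime).two_le
  have hp0 : (0 : ℝ) ≤ p := by linarith
  have hα := alphaConst_pos (by linarith) (by linarith : -1 < b)
  have hpow (m : ℕ) : (p : ℝ) ^ ((m : ℝ) * b) = ((p : ℝ) ^ b) ^ m := by
    rw [mul_comm, Real.rpow_mul hp0, Real.rpow_natCast]
  have hP : Tendsto (fun m : ℕ => (p : ℝ) ^ ((m : ℝ) * b)) atTop atTop := by
    simpa only [hpow] using tendsto_pow_atTop_atTop_of_one_lt (Real.one_lt_rpow (by linarith) hb)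
  have h := (tendstoUniformlyOn_ite_one_sub_mul_pow_floor hP hα (alphaConst_lt_two hp2 b)
    (mul_pos ht (div_pos hσ hα))).comp fun y : ℚ_[p] => ‖y‖ ^ b
  have hpre : (fun y : ℚ_[p] => ‖y‖ ^ b) ⁻¹' Set.Ici 0 = Set.univ :=
    Set.eq_univ_of_forall fun y => Real.rpow_nonneg (norm_nonneg y) b
  rw [hpre, tendstoUniformlyOn_univ] at h
  convert h using 1
  · ext m y
    have hle : ‖y‖ ≤ (p : ℝ) ^ (m : ℤ) ↔ ‖y‖ ^ b ≤ (p : ℝ) ^ ((m : ℝ) * b) := by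
      rw [Real.rpow_mul hp0, Real.rpow_natCast, zpow_natCast,
        Real.rpow_le_rpow_iff (norm_nonneg y) (by positivity) hb]
    simp only [Function.comp_apply, hle, Real.rpow_neg hp0]
  · ext y
    simp only [Function.comp_apply]
    field_simp
end
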